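/- Let A and B be disjoint subsets of {1,…,p} with B nonempty and |A| + |B| ≤ 6s*. Then for every t ∈ ℝ^B, max_{j∈B} ‖(Φ_{A∪{j}} − Φ_A) X_B t‖² ≥ n ν² ‖t‖² / |B| ≥ n ν² min_{j∈B} t_j², where X_B t = Σ_{j∈B} t_j X_j. -/

import Mathlib

open scoped BigOperators
open Finset

noncomputable section

/-- Span of the columns `X j`, `j ∈ S`. -/
def colSpan {n p : ℕ} (X : Fin p → EuclideanSpace ℝ (Fin n)) (S : Finset (Fin p)) :
    Submodule ℝ (EuclideanSpace ℝ (Fin n)) :=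
  Submodule.span ℝ (X '' ↑S)

/-- `Φ_S`, the orthogonal projection of ℝ^n onto the span of the columns in `S`. -/
noncomputable def proj {n p : ℕ} (X : Fin p → EuclideanSpace ℝ (Fin n)) (S : Finset (Fin p)) :
    EuclideanSpace ℝ (Fin n) →ₗ[ℝ] EuclideanSpace ℝ (Fin n) :=
  (colSpan X S).subtype ∘ₗ ((colSpan X S).orthogonalProjection).toLinearMap

/-- Restricted eigenvalue condition: `‖X_S w‖² ≥ n ν ‖w‖²` for all `S` with `|S| ≤ m`. -/
def RECond {n p : ℕ} (X : Fin p → EuclideanSpace ℝ (Fin n)) (ν : ℝ) (m : ℕ) : Prop :=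
  ∀ S : Finset (Fin p), S.card ≤ m → ∀ w : Fin p → ℝ,
    (n : ℝ) * ν * ∑ j ∈ S, w j ^ 2 ≤ ‖∑ j ∈ S, w j • X j‖ ^ 2

end


/-!
Put `r = v - Φ_A v`. Writing `Φ_A v` in the columns of `A` exhibits `r` as `X_{A ∪ B} w` with
`w = t` on `B`, so the restricted eigenvalue condition gives `‖r‖² ≥ n ν ‖t‖²`. On the other hand
`‖r‖² = ⟪v, r⟫ = ∑_{j ∈ B} t_j ⟪X_j, r⟫`, and as `X_j` lies in the span of `A ∪ {j}` we have
`⟪X_j, r⟫ = ⟪X_j, (Φ_{A ∪ {j}} - Φ_A) v⟫`, whose square is at most `n` times the maximum `M`.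
Cauchy–Schwarz gives `‖r‖⁴ ≤ ‖t‖² |B| n M`, and comparing with the lower bound yields
`n ν² ‖t‖² ≤ |B| M`. The second inequality is "minimum ≤ mean".
-/

open scoped RealInnerProductSpace

theorem proj_apply {n p : ℕ} (X : Fin p → EuclideanSpace ℝ (Fin n)) (S : Finset (Fin p))
    (v : EuclideanSpace ℝ (Fin n)) : proj X S v = (colSpan X S).starProjection v :=
  rfl

section Projection

variable {E : Type*} [NormedAddCommGroup E] [InnerProductSpace ℝ E]
  (K : Submodule ℝ E) [K.HasOrthogonalProjection]

theorem Submodule.inner_sub_starProjection_self (v : E) :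
    ⟪v, v - K.starProjection v⟫ = ‖v - K.starProjection v‖ ^ 2 := by
  have h : ⟪K.starProjection v, v - K.starProjection v⟫ = 0 := by
    rw [real_inner_comm]
    exact K.starProjection_inner_eq_zero v _ (K.starProjection_apply_mem v)
  rw [← real_inner_self_eq_norm_sq, inner_sub_left, h, sub_zero]

theorem Submodule.inner_sub_starProjection_of_mem {L : Submodule ℝ E} [L.HasOrthogonalProjection]
    {x : E} (hx : x ∈ L) (v : E) :
    ⟪x, v - K.starProjection v⟫ = ⟪x, L.starProjection v - K.starProjection v⟫ := by
  have h : ⟪x, v - L.starProjection v⟫ = 0 := by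
    rw [real_inner_comm]
    exact L.starProjection_inner_eq_zero v x hx
  rw [← sub_add_sub_cancel v (L.starProjection v), inner_add_right, h, zero_add]

theorem Submodule.sq_norm_sq_sub_starProjection_le {ι : Type*} {X : ι → E} {B : Finset ι}
    {t : ι → ℝ} {v : E} (hv : v = ∑ k ∈ B, t k • X k) (L : ι → Submodule ℝ E)
    [∀ j, (L j).HasOrthogonalProjection] (hXL : ∀ j ∈ B, X j ∈ L j) {c M : ℝ}
    (hX : ∀ j ∈ B, ‖X j‖ ^ 2 ≤ c)
    (hM : ∀ j ∈ B, ‖(L j).starProjection v - K.starProjection v‖ ^ 2 ≤ M) :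
    (‖v - K.starProjection v‖ ^ 2) ^ 2 ≤ (∑ j ∈ B, t j ^ 2) * (B.card * (c * M)) := by
  set r := v - K.starProjection v
  have hr : ‖r‖ ^ 2 = ∑ j ∈ B, t j * ⟪X j, r⟫ := by
    rw [← K.inner_sub_starProjection_self]
    nth_rw 1 [hv]
    rw [sum_inner]
    exact sum_congr rfl fun j _ => real_inner_smul_left _ _ _
  have hcoef : ∀ j ∈ B, ⟪X j, r⟫ ^ 2 ≤ c * M := fun j hj => by
    rw [K.inner_sub_starProjection_of_mem (hXL j hj)]
    calc _ ≤ (‖X j‖ * ‖(L j).starProjection v - K.starProjection v‖) ^ 2 := by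
          rw [← sq_abs]; gcongr; exact abs_real_inner_le_norm _ _
      _ ≤ c * M := by
          rw [mul_pow]
          exact mul_le_mul (hX j hj) (hM j hj) (sq_nonneg _) ((sq_nonneg _).trans (hX j hj))
  calc (‖r‖ ^ 2) ^ 2 ≤ (∑ j ∈ B, t j ^ 2) * ∑ j ∈ B, ⟪X j, r⟫ ^ 2 := by
        rw [hr]; exact sum_mul_sq_le_sq_mul_sq B t _
    _ ≤ (∑ j ∈ B, t j ^ 2) * (B.card * (c * M)) := by
        gcongr
        simpa only [nsmul_eq_mul] using sum_le_card_nsmul B _ _ hcoef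

end Projection

theorem Submodule.exists_sum_union_eq_sum_sub_of_mem_span {R M ι : Type*} [Ring R]
    [AddCommGroup M] [Module R M] [DecidableEq ι] {X : ι → M} {A B : Finset ι}
    (hAB : Disjoint A B) (t : ι → R) {u : M} (hu : u ∈ span R (X '' A)) :
    ∃ w : ι → R, (∀ j ∈ B, w j = t j) ∧
      ∑ j ∈ A ∪ B, w j • X j = ∑ j ∈ B, t j • X j - u := by
  obtain ⟨c, rfl⟩ := (Fintype.mem_span_image_iff_exists_fun R).mp hu
  refine ⟨fun j => if h : j ∈ A then -c ⟨j, h⟩ else t j, fun j hj => ?_, ?_⟩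
  · simp [disjoint_right.mp hAB hj]
  · rw [sum_union hAB, sub_eq_neg_add, ← sum_neg_distrib, ← sum_attach A]
    congr 1
    · exact sum_congr rfl fun j _ => by simp [j.2]
    · exact sum_congr rfl fun j hj => by simp [disjoint_right.mp hAB hj]

theorem RECond.mul_sum_sq_le_norm_sq_sub_proj {n p m : ℕ} {X : Fin p → EuclideanSpace ℝ (Fin n)}
    {ν : ℝ} (hRE : RECond X ν m) (hν : 0 ≤ ν) {A B : Finset (Fin p)} (hAB : Disjoint A B)
    (hcard : A.card + B.card ≤ m) {t : Fin p → ℝ} {v : EuclideanSpace ℝ (Fin n)}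
    (hv : v = ∑ k ∈ B, t k • X k) :
    n * ν * ∑ j ∈ B, t j ^ 2 ≤ ‖v - proj X A v‖ ^ 2 := by
  classical
  subst hv
  obtain ⟨w, hwB, hw⟩ := Submodule.exists_sum_union_eq_sum_sub_of_mem_span hAB t
    ((colSpan X A).starProjection_apply_mem _)
  rw [proj_apply, ← hw]
  calc (n : ℝ) * ν * ∑ j ∈ B, t j ^ 2 = n * ν * ∑ j ∈ B, w j ^ 2 := by
        congr 1
        exact sum_congr rfl fun j hj => by rw [hwB j hj]
    _ ≤ n * ν * ∑ j ∈ A ∪ B, w j ^ 2 := by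
        gcongr
        exact subset_union_right
    _ ≤ _ := hRE _ ((card_union_le A B).trans hcard) w

theorem stmt5_general {n p s : ℕ}
    (X : Fin p → EuclideanSpace ℝ (Fin n))
    (hX : ∀ j, ‖X j‖ = Real.sqrt n)
    {ν : ℝ} (hν : 0 < ν) (hRE : RECond X ν (6 * s))
    (A B : Finset (Fin p)) (hdisj : Disjoint A B) (hB : B.Nonempty)
    (hcard : A.card + B.card ≤ 6 * s)
    (t : Fin p → ℝ)
    (v : EuclideanSpace ℝ (Fin n)) (hv : v = ∑ k ∈ B, t k • X k) :
    (n : ℝ) * ν ^ 2 * (∑ j ∈ B, t j ^ 2) / B.card ≤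
      (B.sup' hB fun j => ‖proj X (insert j A) v - proj X A v‖ ^ 2) ∧
    (n : ℝ) * ν ^ 2 * (B.inf' hB fun j => t j ^ 2) ≤
      (n : ℝ) * ν ^ 2 * (∑ j ∈ B, t j ^ 2) / B.card := by
  set d : Fin p → ℝ := fun j => ‖proj X (insert j A) v - proj X A v‖ ^ 2
  set M := B.sup' hB d
  set T := ∑ j ∈ B, t j ^ 2
  have hlow : n * ν * T ≤ ‖v - proj X A v‖ ^ 2 :=
    hRE.mul_sum_sq_le_norm_sq_sub_proj hν.le hdisj hcard hv
  have hup : (‖v - proj X A v‖ ^ 2) ^ 2 ≤ T * (B.card * (n * M)) :=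
    (colSpan X A).sq_norm_sq_sub_starProjection_le hv (fun j => colSpan X (insert j A))
      (fun j _ => Submodule.subset_span ⟨j, mem_insert_self j A, rfl⟩)
      (fun j _ => by rw [hX j, Real.sq_sqrt n.cast_nonneg]) (fun j hj => le_sup' d hj)
  refine ⟨?_, ?_⟩
  · have hM : 0 ≤ M := (sq_nonneg _).trans (le_sup' d hB.choose_spec)
    have key : (n * T) * (n * ν ^ 2 * T) ≤ (n * T) * (M * B.card) :=
      calc _ = (n * ν * T) ^ 2 := by ring
        _ ≤ T * (B.card * (n * M)) := (pow_le_pow_left₀ (by positivity) hlow 2).trans hup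
        _ = _ := by ring
    rw [div_le_iff₀ (by exact_mod_cast hB.card_pos)]
    rcases (by positivity : (0 : ℝ) ≤ n * T).eq_or_lt with h | h
    · rw [show (n : ℝ) * ν ^ 2 * T = 0 by linear_combination (-ν ^ 2) * h]
      positivity
    · exact le_of_mul_le_mul_left key h
  · rw [mul_div_assoc, ← expect_eq_sum_div_card]
    gcongr
    exact le_expect hB fun j hj => inf'_le _ hj

/-- max_{j∈B} ‖(Φ_{A∪{j}} − Φ_A) X_B t‖² ≥ nν²‖t‖²/|B| ≥ nν² min_{j∈B} t_j². -/
theorem stmt5 {n p s : ℕ} (hn : 0 < n) (hp : 0 < p) (hs : 0 < s)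
    (X : Fin p → EuclideanSpace ℝ (Fin n))
    (hX : ∀ j, ‖X j‖ = Real.sqrt n)
    {ν : ℝ} (hν : 0 < ν) (hRE : RECond X ν (6 * s))
    (A B : Finset (Fin p)) (hdisj : Disjoint A B) (hB : B.Nonempty)
    (hcard : A.card + B.card ≤ 6 * s)
    (t : Fin p → ℝ)
    (v : EuclideanSpace ℝ (Fin n)) (hv : v = ∑ k ∈ B, t k • X k) :
    (n : ℝ) * ν ^ 2 * (∑ j ∈ B, t j ^ 2) / B.card ≤
      (B.sup' hB fun j => ‖proj X (insert j A) v - proj X A v‖ ^ 2) ∧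
    (n : ℝ) * ν ^ 2 * (B.inf' hB fun j => t j ^ 2) ≤
      (n : ℝ) * ν ^ 2 * (∑ j ∈ B, t j ^ 2) / B.card :=
  stmt5_general X hX hν hRE A B hdisj hB hcard t v hv
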